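/- For every R ∈ C²(V) and every symmetric bilinear form h ∈ C^1(V), the second contraction of F_h(R) is given by c_g²(F_h(R)) = 4·⟨ℛ, h⟩, where ℛ = c_g R and ⟨ℛ, h⟩ = Σ_{i,j} ℛ(e_i,e_j)·h(e_i,e_j) for an orthonormal basis {e_i}. -/

import Mathlib

/-- Double forms on the inner product space `ℝⁿ` (with its standard inner product `g`),
described by their components with respect to the standard orthonormal basis: the component
at bidegree `(p, q)` is a real-valued function of `p` "row" indices and `q` "column" indices
(an element of `Λᵖ(ℝⁿ)* ⊗ Λ^q(ℝⁿ)*` is exactly such a component function which is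
antisymmetric in each group of indices). -/
abbrev DoubleForm (n : ℕ) : Type :=
  ∀ p q : ℕ, (Fin p → Fin n) → (Fin q → Fin n) → ℝ

/-- `ω` is a double form of bidegree `(p, q)`: it is concentrated at `(p, q)` and is
antisymmetric in each group of arguments. -/
def dfHasBidegree (n p q : ℕ) (ω : DoubleForm n) : Prop :=
  (∀ p' q', ¬(p' = p ∧ q' = q) → ω p' q' = 0) ∧
  (∀ (σ : Equiv.Perm (Fin p)) (x : Fin p → Fin n) (y : Fin q → Fin n),
      ω p q (x ∘ σ) y = ((Equiv.Perm.sign σ : ℤ) : ℝ) * ω p q x y) ∧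
  (∀ (τ : Equiv.Perm (Fin q)) (x : Fin p → Fin n) (y : Fin q → Fin n),
      ω p q x (y ∘ τ) = ((Equiv.Perm.sign τ : ℤ) : ℝ) * ω p q x y)

/-- The unit double form (the constant `1` in bidegree `(0,0)`). -/
noncomputable def dfOne (n : ℕ) : DoubleForm n
  | 0, 0, _, _ => 1
  | _, _, _, _ => 0

/-- The metric `g` (the standard inner product) as a `(1,1)` double form. -/
noncomputable def dfG (n : ℕ) : DoubleForm n
  | 1, 1, x, y => if x 0 = y 0 then 1 else 0
  | _, _, _, _ => 0

/-- The product of double forms: the wedge product (determinant convention) on each of the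
two tensor factors, with no extra sign (so that `(θ₁⊗θ₂)·(θ₃⊗θ₄) = (θ₁∧θ₃)⊗(θ₂∧θ₄)`). -/
noncomputable def dfMul (n : ℕ) (ω θ : DoubleForm n) : DoubleForm n :=
  fun p q x y =>
    ∑ p₁ : Fin (p + 1), ∑ q₁ : Fin (q + 1),
      (((p₁ : ℕ).factorial * (p - (p₁ : ℕ)).factorial *
          (q₁ : ℕ).factorial * (q - (q₁ : ℕ)).factorial : ℕ) : ℝ)⁻¹ *
        ∑ σ : Equiv.Perm (Fin p), ∑ τ : Equiv.Perm (Fin q),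
          ((Equiv.Perm.sign σ : ℤ) : ℝ) * ((Equiv.Perm.sign τ : ℤ) : ℝ) *
            (ω (p₁ : ℕ) (q₁ : ℕ)
               (fun i => x (σ (Fin.castLE (Nat.lt_succ_iff.mp p₁.isLt) i)))
               (fun j => y (τ (Fin.castLE (Nat.lt_succ_iff.mp q₁.isLt) j))) *
             θ (p - (p₁ : ℕ)) (q - (q₁ : ℕ))
               (fun i => x (σ ⟨(p₁ : ℕ) + (i : ℕ), by
                  have h1 := i.isLt; have h2 := p₁.isLt; omega⟩))
               (fun j => y (τ ⟨(q₁ : ℕ) + (j : ℕ), by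
                  have h1 := j.isLt; have h2 := q₁.isLt; omega⟩)))

/-- Powers of a double form with respect to the product `dfMul`. -/
noncomputable def dfPow (n : ℕ) (ω : DoubleForm n) : ℕ → DoubleForm n
  | 0 => dfOne n
  | m + 1 => dfMul n (dfPow n ω m) ω

/-- The contraction `c_g` with respect to the standard inner product: it maps the
`(p+1, q+1)` component to the `(p, q)` component by tracing over a pair of slots
(and is zero on bidegrees `(p, 0)` and `(0, q)`). -/
noncomputable def dfContr (n : ℕ) (ω : DoubleForm n) : DoubleForm n :=
  fun p q x y => ∑ i : Fin n, ω (p + 1) (q + 1) (Fin.cons i x) (Fin.cons i y)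

/-- The natural inner product, at bidegree `(p, q)`, induced by `g` on double forms
(for which the monomials with strictly increasing indices are orthonormal). -/
noncomputable def dfInner (n p q : ℕ) (ω θ : DoubleForm n) : ℝ :=
  ((p.factorial * q.factorial : ℕ) : ℝ)⁻¹ *
    ∑ x : Fin p → Fin n, ∑ y : Fin q → Fin n, ω p q x y * θ p q x y

/-- For a bilinear form `h` on `ℝⁿ` (given by its component matrix), the operator `F_h`,
inserting the `g`-symmetric endomorphism `H` associated to `h` into each slot in turn. -/
noncomputable def dfF (n : ℕ) (h : Fin n → Fin n → ℝ) (ω : DoubleForm n) : DoubleForm n :=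
  fun p q x y =>
    (∑ k : Fin p, ∑ i : Fin n, h (x k) i * ω p q (Function.update x k i) y) +
    (∑ k : Fin q, ∑ i : Fin n, h (y k) i * ω p q x (Function.update y k i))

/-- A bilinear form on `ℝⁿ` (given by its component matrix) as a `(1,1)` double form. -/
noncomputable def dfOfMatrix (n : ℕ) (h : Fin n → Fin n → ℝ) : DoubleForm n
  | 1, 1, x, y => h (x 0) (y 0)
  | _, _, _, _ => 0

/-- The component matrix of the `(1,1)` part of a double form. -/
noncomputable def dfMat (n : ℕ) (ω : DoubleForm n) : Fin n → Fin n → ℝ :=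
  fun i j => ω 1 1 (fun _ => i) (fun _ => j)

/-- `R ∈ C²`: a `(2,2)` double form satisfying the symmetry
`R(x₁∧x₂ ⊗ y₁∧y₂) = R(y₁∧y₂ ⊗ x₁∧x₂)`. -/
def dfIsC2 (n : ℕ) (R : DoubleForm n) : Prop :=
  dfHasBidegree n 2 2 R ∧ ∀ x y : Fin 2 → Fin n, R 2 2 x y = R 2 2 y x

/-- The operator `𝔑_R` : `(𝔑_R h)(v, w) = Σᵢ h(R(v, eᵢ)w, eᵢ)`, where the `(3,1)`-tensor of
`R` is determined by `g(R(x,y)z, u) = R(x∧y ⊗ z∧u)`. -/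
noncomputable def curvAction (n : ℕ) (R : DoubleForm n) (h : Fin n → Fin n → ℝ) :
    Fin n → Fin n → ℝ :=
  fun v w => ∑ i : Fin n, ∑ u : Fin n, R 2 2 ![v, i] ![w, u] * h u i

/-- The contraction associated to an arbitrary metric on `ℝⁿ` whose Gram matrix in the
standard basis is `G`: `c_{g'} ω = Σᵢⱼ (G⁻¹)ᵢⱼ ω(vᵢ∧… ⊗ vⱼ∧…)`. -/
noncomputable def dfContrM (n : ℕ) (G : Matrix (Fin n) (Fin n) ℝ) (ω : DoubleForm n) :
    DoubleForm n :=
  fun p q x y => ∑ i : Fin n, ∑ j : Fin n,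
    (G⁻¹) i j * ω (p + 1) (q + 1) (Fin.cons i x) (Fin.cons j y)

/-!
Only the `(0,0)` component of `c_g²(F_h R)` can be nonzero, and there it is a sum of
`F_h R` over diagonal arguments `eⱼ∧eᵢ ⊗ eⱼ∧eᵢ`. On the diagonal the symmetry of `R ∈ C²`
makes the two halves of `F_h` equal, and the antisymmetry of `R` in each pair makes the
insertion of `H` into the second slot of a pair contribute as much as the insertion into the
first; that one contribution is `⟨c_g R, h⟩`, whence the factor `2 · 2 = 4`.
-/

variable {n : ℕ}

lemma dfOne_apply_of_not_zero {p q : ℕ} (hpq : ¬(p = 0 ∧ q = 0))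
    (x : Fin p → Fin n) (y : Fin q → Fin n) : dfOne n p q x y = 0 := by
  rcases p with _ | p <;> rcases q with _ | q <;> simp_all [dfOne]

lemma dfContr_iterate_two_apply (ω : DoubleForm n) (p q : ℕ)
    (x : Fin p → Fin n) (y : Fin q → Fin n) :
    (dfContr n)^[2] ω p q x y =
      ∑ i : Fin n, ∑ j : Fin n,
        ω (p + 2) (q + 2) (Fin.cons j (Fin.cons i x)) (Fin.cons j (Fin.cons i y)) :=
  rfl

lemma dfMat_dfContr (ω : DoubleForm n) (i j : Fin n) :
    dfMat n (dfContr n ω) i j = ∑ k : Fin n, ω 2 2 ![k, i] ![k, j] := by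
  unfold dfMat dfContr
  refine Finset.sum_congr rfl fun k _ => ?_
  congr 1 <;> funext t <;> fin_cases t <;> rfl

lemma dfF_eq_zero_of_eq_zero (h : Fin n → Fin n → ℝ) {ω : DoubleForm n} {p q : ℕ}
    (hω : ω p q = 0) : dfF n h ω p q = 0 := by
  funext x y
  simp [dfF, hω]

lemma dfF_apply_diag (h : Fin n → Fin n → ℝ) {ω : DoubleForm n} {p : ℕ}
    (hω : ∀ x y, ω p p x y = ω p p y x) (x : Fin p → Fin n) :
    dfF n h ω p p x x = 2 * ∑ k, ∑ i, h (x k) i * ω p p (Function.update x k i) x := by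
  simp only [dfF, hω x (Function.update x _ _)]
  ring

lemma update_vecCons_zero {α : Type*} (a b c : α) : Function.update ![a, b] 0 c = ![c, b] := by
  funext t; fin_cases t <;> simp

lemma update_vecCons_one {α : Type*} (a b c : α) : Function.update ![a, b] 1 c = ![a, c] := by
  funext t; fin_cases t <;> simp

namespace dfHasBidegree

variable {ω : DoubleForm n}

lemma apply_swap_left (hω : dfHasBidegree n 2 2 ω) (a b : Fin n) (w : Fin 2 → Fin n) :
    ω 2 2 ![b, a] w = -ω 2 2 ![a, b] w := by
  have hswap : ![a, b] ∘ Equiv.swap 0 1 = ![b, a] := by funext t; fin_cases t <;> simp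
  simpa [hswap] using hω.2.1 (Equiv.swap 0 1) ![a, b] w

lemma apply_swap_right (hω : dfHasBidegree n 2 2 ω) (w : Fin 2 → Fin n) (a b : Fin n) :
    ω 2 2 w ![b, a] = -ω 2 2 w ![a, b] := by
  have hswap : ![a, b] ∘ Equiv.swap 0 1 = ![b, a] := by funext t; fin_cases t <;> simp
  simpa [hswap] using hω.2.2 (Equiv.swap 0 1) w ![a, b]

lemma sum_update_right_eq_sum_update_left (hω : dfHasBidegree n 2 2 ω)
    (h : Fin n → Fin n → ℝ) :
    ∑ i : Fin n, ∑ j : Fin n, ∑ m : Fin n, h i m * ω 2 2 ![j, m] ![j, i] =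
      ∑ i : Fin n, ∑ j : Fin n, ∑ m : Fin n, h j m * ω 2 2 ![m, i] ![j, i] := by
  rw [Finset.sum_comm]
  refine Fintype.sum_congr _ _ fun i => Fintype.sum_congr _ _ fun j => ?_
  refine Fintype.sum_congr _ _ fun m => ?_
  rw [hω.apply_swap_left, hω.apply_swap_right, neg_neg]

lemma sum_update_left_eq_sum_dfMat_dfContr (hω : dfHasBidegree n 2 2 ω)
    (h : Fin n → Fin n → ℝ) (hsym : ∀ i j, h i j = h j i) :
    ∑ i : Fin n, ∑ j : Fin n, ∑ m : Fin n, h j m * ω 2 2 ![m, i] ![j, i] =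
      ∑ i : Fin n, ∑ j : Fin n, dfMat n (dfContr n ω) i j * h i j := by
  simp only [dfMat_dfContr, Finset.sum_mul]
  rw [Finset.sum_comm_cycle]
  refine Fintype.sum_congr _ _ fun m => ?_
  rw [Finset.sum_comm]
  refine Fintype.sum_congr _ _ fun j => Fintype.sum_congr _ _ fun i => ?_
  rw [hω.apply_swap_left, hω.apply_swap_right, neg_neg, hsym, mul_comm]

end dfHasBidegree

lemma dfIsC2.dfContr_iterate_two_dfF_zero {R : DoubleForm n} (hR : dfIsC2 n R)
    (h : Fin n → Fin n → ℝ) (hsym : ∀ i j, h i j = h j i) (x y : Fin 0 → Fin n) :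
    (dfContr n)^[2] (dfF n h R) 0 0 x y =
      4 * ∑ i : Fin n, ∑ j : Fin n, dfMat n (dfContr n R) i j * h i j := by
  have hcons : ∀ (i j : Fin n) (z : Fin 0 → Fin n),
      (Fin.cons j (Fin.cons i z) : Fin 2 → Fin n) = ![j, i] := by
    intro i j z; funext t; fin_cases t <;> rfl
  simp only [dfContr_iterate_two_apply, hcons, dfF_apply_diag h hR.2, Fin.sum_univ_two,
    update_vecCons_zero, update_vecCons_one, Matrix.cons_val_zero, Matrix.cons_val_one]
  simp only [← Finset.mul_sum, Finset.sum_add_distrib, hR.1.sum_update_right_eq_sum_update_left,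
    hR.1.sum_update_left_eq_sum_dfMat_dfContr h hsym]
  ring

/-- for every `R ∈ C²(V)` and every symmetric bilinear form `h ∈ C¹(V)`,
`c_g²(F_h(R)) = 4·⟨ℛ, h⟩` with `ℛ = c_g R` and `⟨ℛ, h⟩ = Σ_{i,j} ℛ(eᵢ,eⱼ)·h(eᵢ,eⱼ)`. -/
theorem stmt_10 (n : ℕ) (R : DoubleForm n) (hR : dfIsC2 n R)
    (h : Fin n → Fin n → ℝ) (hsym : ∀ i j, h i j = h j i) :
    (dfContr n)^[2] (dfF n h R) =
      (4 * ∑ i : Fin n, ∑ j : Fin n, dfMat n (dfContr n R) i j * h i j) • dfOne n := by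
  funext p q x y
  by_cases hpq : p = 0 ∧ q = 0
  · obtain ⟨rfl, rfl⟩ := hpq
    rw [hR.dfContr_iterate_two_dfF_zero h hsym]
    simp [dfOne]
  · have hRpq : R (p + 2) (q + 2) = 0 := hR.1.1 _ _ (by omega)
    simp [dfContr_iterate_two_apply, dfF_eq_zero_of_eq_zero h hRpq, dfOne_apply_of_not_zero hpq]
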